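/- Let r≥2 be an integer and suppose ψ∈C_p(ℝ) satisfies m·d(x) ≤ ψ(x) for all x∈[0,1], for some constant m>0, where d(x)=dist(x,ℤ). Then (m r/(r-1))·x(1-x) ≤ m·τ_r(x) ≤ U_ψ(x) for all x∈[0,1], where τ_r(x)=Σ_{j≥0} r^{-j} d(r^j x) and U_ψ(x)=Σ_{j≥0} r^{-j} ψ(r^j x). -/

import Mathlib

/-- `C_p(ℝ)`: continuous, periodic with period 1, vanishing at 0. -/
def IsCp (f : ℝ → ℝ) : Prop := Continuous f ∧ (∀ x, f (x + 1) = f x) ∧ f 0 = 0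

/-- Forward difference δ⁺_{n,k}(y;f). -/
noncomputable def delP (r : ℕ) (f : ℝ → ℝ) (n : ℕ) (k : ℤ) (y : ℝ) : ℝ :=
  (f (((k : ℝ) + 1) / (r : ℝ) ^ n) - f (((k : ℝ) + y) / (r : ℝ) ^ n)) / ((1 - y) / (r : ℝ) ^ n)

/-- Backward difference δ⁻_{n,k}(y;f). -/
noncomputable def delM (r : ℕ) (f : ℝ → ℝ) (n : ℕ) (k : ℤ) (y : ℝ) : ℝ :=
  (f (((k : ℝ) + y) / (r : ℝ) ^ n) - f ((k : ℝ) / (r : ℝ) ^ n)) / (y / (r : ℝ) ^ n)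

/-- Second-order central difference Δ_{n,k}(y;f). -/
noncomputable def Del (r : ℕ) (f : ℝ → ℝ) (n : ℕ) (k : ℤ) (y : ℝ) : ℝ :=
  2 * (r : ℝ) ^ n * (delP r f n k y - delM r f n k y)

/-- The operator U: U_ψ(x) = Σ_{j≥0} ψ(rʲx)/rʲ. -/
noncomputable def Uop (r : ℕ) (ψ : ℝ → ℝ) (x : ℝ) : ℝ := ∑' j : ℕ, ψ ((r : ℝ) ^ j * x) / (r : ℝ) ^ j

/-- Distance to the integers. -/
noncomputable def dZ (x : ℝ) : ℝ := Metric.infDist x (Set.range (Int.cast : ℤ → ℝ))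

/-- The generalized Takagi function τ_r. -/
noncomputable def tak (r : ℕ) : ℝ → ℝ := Uop r dZ

/-- The class P_c: Δ_{n,k}(y;f) ≤ -2crⁿ for all admissible (n,k,y). -/
def memP (r : ℕ) (c : ℝ) (f : ℝ → ℝ) : Prop :=
  ∀ (n : ℕ) (k : ℤ), 0 ≤ k → k ≤ (r : ℤ) ^ n - 1 →
    ∀ y ∈ Set.Ioo (0 : ℝ) 1, Del r f n k y ≤ -2 * c * (r : ℝ) ^ n

/-- The parabola q_f(t,x;z). -/
noncomputable def qf (f : ℝ → ℝ) (t x z : ℝ) : ℝ := f z + (x - z) ^ 2 / (2 * t)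

lemma dZ_eq_min (x : ℝ) : dZ x = min (Int.fract x) (1 - Int.fract x) := by
  have hne : (Set.range (Int.cast : ℤ → ℝ)).Nonempty := ⟨0, ⟨0, by simp⟩⟩
  have hf0 : 0 ≤ Int.fract x := Int.fract_nonneg x
  have hf1 : Int.fract x < 1 := Int.fract_lt_one x
  apply le_antisymm
  · apply le_min
    · calc dZ x ≤ dist x ((⌊x⌋ : ℤ) : ℝ) := Metric.infDist_le_dist_of_mem ⟨⌊x⌋, rfl⟩
        _ = Int.fract x := by
            rw [Real.dist_eq, Int.self_sub_floor, abs_of_nonneg hf0]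
    · calc dZ x ≤ dist x (((⌊x⌋ + 1 : ℤ) : ℝ)) := Metric.infDist_le_dist_of_mem ⟨⌊x⌋ + 1, rfl⟩
        _ = 1 - Int.fract x := by
            have hfl : Int.fract x = x - ⌊x⌋ := (Int.self_sub_floor x).symm
            rw [Real.dist_eq, abs_of_nonpos (by push_cast; linarith)]
            push_cast; linarith
  · apply le_of_not_gt
    intro h
    rw [dZ] at h
    obtain ⟨y, ⟨z, rfl⟩, hy⟩ := (Metric.infDist_lt_iff hne).mp h
    rw [Real.dist_eq] at hy
    have hfl : Int.fract x = x - ⌊x⌋ := (Int.self_sub_floor x).symm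
    rcases le_or_gt (z : ℝ) (⌊x⌋ : ℝ) with hz | hz
    · have h1 : Int.fract x ≤ x - z := by rw [hfl]; linarith
      have := min_le_left (Int.fract x) (1 - Int.fract x)
      have := le_abs_self (x - (z : ℝ))
      linarith
    · have hz' : (⌊x⌋ : ℝ) + 1 ≤ (z : ℝ) := by exact_mod_cast Int.lt_iff_add_one_le.mp (by exact_mod_cast hz)
      have h1 : 1 - Int.fract x ≤ (z : ℝ) - x := by rw [hfl]; linarith
      have := min_le_right (Int.fract x) (1 - Int.fract x)
      have := neg_abs_le (x - (z : ℝ))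
      linarith

lemma dZ_nonneg (x : ℝ) : 0 ≤ dZ x := Metric.infDist_nonneg

lemma dZ_le_half (x : ℝ) : dZ x ≤ 1 / 2 := by
  rw [dZ_eq_min]
  rcases le_total (Int.fract x) (1/2) with h | h
  · exact le_trans (min_le_left _ _) h
  · exact le_trans (min_le_right _ _) (by linarith)

lemma dZ_fract (x : ℝ) : dZ (Int.fract x) = dZ x := by
  rw [dZ_eq_min, dZ_eq_min, Int.fract_fract]

lemma keyclean (r : ℕ) (hr : 2 ≤ r) (t : ℝ) (ht0 : 0 ≤ t) (ht1 : t < 1) :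
    (r:ℝ)^2 * (t*(1-t)) ≤ (r:ℝ)*((r:ℝ)-1) * dZ t
      + ((r:ℝ)-1) * (Int.fract ((r:ℝ)*t) * (1 - Int.fract ((r:ℝ)*t))) := by
  have hR : (2:ℝ) ≤ (r:ℝ) := by exact_mod_cast hr
  set y := Int.fract ((r:ℝ)*t) with hy
  set k := ⌊(r:ℝ)*t⌋ with hk
  have hy0 : 0 ≤ y := Int.fract_nonneg _
  have hy1 : y < 1 := Int.fract_lt_one _
  have hs : (r:ℝ)*t = (k:ℝ) + y := by rw [hy, hk, Int.fract]; ring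
  have hk0 : 0 ≤ k := Int.floor_nonneg.mpr (by positivity)
  have hk1 : k ≤ (r:ℤ) - 1 := by
    have : ⌊(r:ℝ)*t⌋ < (r:ℤ) := Int.floor_lt.mpr (by
      calc (r:ℝ)*t < (r:ℝ)*1 := by
            apply mul_lt_mul_of_pos_left ht1 (by positivity)
        _ = ((r:ℤ):ℝ) := by push_cast; ring)
    omega
  have hk0' : (0:ℝ) ≤ (k:ℝ) := by exact_mod_cast hk0
  have hk1' : (k:ℝ) ≤ (r:ℝ) - 1 := by
    have : ((k:ℤ):ℝ) ≤ (((r:ℤ) - 1 : ℤ):ℝ) := by exact_mod_cast hk1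
    push_cast at this; linarith
  have hkkZ : 0 ≤ k * (k - 1) := by
    rcases le_or_gt k 0 with h | h <;> nlinarith
  have hkk : (0:ℝ) ≤ (k:ℝ) * ((k:ℝ) - 1) := by exact_mod_cast hkkZ
  have hkk2Z : 0 ≤ ((r:ℤ) - 1 - k) * ((r:ℤ) - 2 - k) := by
    rcases lt_or_ge k ((r:ℤ) - 1) with h | h
    · exact mul_nonneg (by omega) (by omega)
    · have : k = (r:ℤ) - 1 := le_antisymm hk1 h
      simp [this]
  have hkk2 : (0:ℝ) ≤ ((r:ℝ) - 1 - (k:ℝ)) * ((r:ℝ) - 2 - (k:ℝ)) := by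
    exact_mod_cast hkk2Z
  have hd : dZ t = min t (1 - t) := by
    rw [dZ_eq_min, Int.fract_eq_self.mpr ⟨ht0, ht1⟩]
  rw [hd]
  rcases min_cases t (1 - t) with ⟨h, _⟩ | ⟨h, _⟩ <;> rw [h]
  · nlinarith [hs, hkk, mul_nonneg hk0' hy0, mul_nonneg (mul_nonneg hy0 (by linarith : (0:ℝ) ≤ 1 - y)) (by linarith : (0:ℝ) ≤ (r:ℝ) - 2)]
  · nlinarith [hs, hkk2, mul_nonneg (by linarith : (0:ℝ) ≤ (r:ℝ) - 1 - (k:ℝ)) (by linarith : (0:ℝ) ≤ 1 - y), mul_nonneg (mul_nonneg hy0 (by linarith : (0:ℝ) ≤ 1 - y)) (by linarith : (0:ℝ) ≤ (r:ℝ) - 2)]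

lemma sum_lower (r : ℕ) (hr : 2 ≤ r) (x : ℝ) (hx0 : 0 ≤ x) (hx1 : x < 1) :
    ∀ N : ℕ, (r:ℝ) * (x*(1-x)) ≤
      ((r:ℝ)-1) * (∑ j ∈ Finset.range N, dZ ((r:ℝ)^j * x) / (r:ℝ)^j)
      + (1/(r:ℝ)^N) * ((r:ℝ) * (Int.fract ((r:ℝ)^N * x) * (1 - Int.fract ((r:ℝ)^N * x)))) := by
  have hR : (2:ℝ) ≤ (r:ℝ) := by exact_mod_cast hr
  intro N
  induction N with
  | zero =>
    simp [Int.fract_eq_self.mpr ⟨hx0, hx1⟩]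
  | succ N ih =>
    set t := Int.fract ((r:ℝ)^N * x) with hT
    have ht0 : 0 ≤ t := Int.fract_nonneg _
    have ht1 : t < 1 := Int.fract_lt_one _
    have hfr : Int.fract ((r:ℝ) * t) = Int.fract ((r:ℝ)^(N+1) * x) := by
      have e : (r:ℝ) * t = (r:ℝ)^(N+1) * x - ((r * ⌊(r:ℝ)^N * x⌋ : ℤ) : ℝ) := by
        rw [hT, Int.fract]; push_cast; ring
      rw [e, Int.fract_sub_intCast]
    have hkey := keyclean r hr t ht0 ht1
    rw [hfr, dZ_fract] at hkey
    set y := Int.fract ((r:ℝ)^(N+1) * x) with hY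
    have hy0 : 0 ≤ y := Int.fract_nonneg _
    have hy1 : y < 1 := Int.fract_lt_one _
    have hPN : (0:ℝ) < (r:ℝ)^N := by positivity
    have hPN1 : (0:ℝ) < (r:ℝ)^(N+1) := by positivity
    -- scaled key inequality
    have hkey2 := mul_le_mul_of_nonneg_left hkey (le_of_lt (one_div_pos.mpr hPN1))
    have e1 : (1/(r:ℝ)^(N+1)) * ((r:ℝ)^2 * (t*(1-t)))
        = (1/(r:ℝ)^N) * ((r:ℝ) * (t*(1-t))) := by
      rw [pow_succ]; field_simp
    have e2 : (1/(r:ℝ)^(N+1)) * ((r:ℝ)*((r:ℝ)-1) * dZ ((r:ℝ)^N * x)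
          + ((r:ℝ)-1) * (y * (1-y)))
        = ((r:ℝ)-1) * (dZ ((r:ℝ)^N * x) / (r:ℝ)^N)
          + (1/(r:ℝ)^(N+1)) * (((r:ℝ)-1) * (y*(1-y))) := by
      rw [pow_succ]; field_simp
    rw [e1, e2] at hkey2
    have hlast : (1/(r:ℝ)^(N+1)) * (((r:ℝ)-1) * (y*(1-y)))
        ≤ (1/(r:ℝ)^(N+1)) * ((r:ℝ) * (y*(1-y))) := by
      apply mul_le_mul_of_nonneg_left _ (le_of_lt (one_div_pos.mpr hPN1))
      nlinarith
    rw [Finset.sum_range_succ, mul_add]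
    linarith

lemma summable_aux (r : ℕ) (hr : 2 ≤ r) (g : ℝ → ℝ) (C : ℝ) (hC : ∀ t, |g t| ≤ C)
    (x : ℝ) : Summable (fun j : ℕ => g ((r:ℝ)^j * x) / (r:ℝ)^j) := by
  have hR : (2:ℝ) ≤ (r:ℝ) := by exact_mod_cast hr
  have h1 : (0:ℝ) ≤ 1/(r:ℝ) := by positivity
  have h2 : 1/(r:ℝ) < 1 := by rw [div_lt_one (by linarith)]; linarith
  apply Summable.of_norm_bounded (g := fun j => C * (1/(r:ℝ))^j)
    ((summable_geometric_of_lt_one h1 h2).mul_left C)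
  intro j
  have hp : (0:ℝ) < (r:ℝ)^j := by positivity
  rw [Real.norm_eq_abs, abs_div, abs_of_pos hp, one_div_pow, mul_one_div]
  exact (div_le_div_iff_of_pos_right hp).mpr (hC _)


theorem stmt9 (r : ℕ) (hr : 2 ≤ r) (ψ : ℝ → ℝ) (hψ : IsCp ψ)
    (m : ℝ) (hm : 0 < m) (hmd : ∀ x ∈ Set.Icc (0:ℝ) 1, m * dZ x ≤ ψ x) :
    ∀ x ∈ Set.Icc (0:ℝ) 1,
      m * (r:ℝ) / ((r:ℝ) - 1) * (x * (1 - x)) ≤ m * tak r x ∧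
      m * tak r x ≤ Uop r ψ x := by
  have hR : (2:ℝ) ≤ (r:ℝ) := by exact_mod_cast hr
  have hR1 : (0:ℝ) < (r:ℝ) - 1 := by linarith
  have hper : Function.Periodic ψ 1 := hψ.2.1
  have hψfract : ∀ t : ℝ, ψ (Int.fract t) = ψ t := by
    intro t
    have h := hper.sub_int_mul_eq (x := t) (n := ⌊t⌋)
    rw [mul_one] at h
    rw [show Int.fract t = t - ⌊t⌋ from (Int.self_sub_floor t).symm]
    exact h
  have hglob : ∀ t : ℝ, m * dZ t ≤ ψ t := by
    intro t
    rw [← dZ_fract t, ← hψfract t]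
    exact hmd _ ⟨Int.fract_nonneg t, (Int.fract_lt_one t).le⟩
  obtain ⟨C, hC⟩ := isCompact_Icc.exists_bound_of_continuousOn
    (s := Set.Icc (0:ℝ) 1) hψ.1.continuousOn
  have hCg : ∀ t, |ψ t| ≤ C := by
    intro t
    rw [← hψfract t]
    exact hC _ ⟨Int.fract_nonneg t, (Int.fract_lt_one t).le⟩
  intro x hx
  have hsum_d : Summable (fun j : ℕ => dZ ((r:ℝ)^j * x) / (r:ℝ)^j) :=
    summable_aux r hr dZ (1/2)
      (fun t => by rw [abs_of_nonneg (dZ_nonneg t)]; exact dZ_le_half t) x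
  have hsum_ψ : Summable (fun j : ℕ => ψ ((r:ℝ)^j * x) / (r:ℝ)^j) :=
    summable_aux r hr ψ C hCg x
  have htak : tak r x = ∑' j : ℕ, dZ ((r:ℝ)^j * x) / (r:ℝ)^j := rfl
  constructor
  · have htak0 : 0 ≤ tak r x :=
      tsum_nonneg (fun j => div_nonneg (dZ_nonneg _) (by positivity))
    rcases eq_or_lt_of_le hx.2 with h1 | h1
    · have e : x * (1 - x) = 0 := by rw [h1]; ring
      rw [e, mul_zero]
      exact mul_nonneg hm.le htak0
    · have hbound : ∀ N : ℕ, (r:ℝ)*(x*(1-x)) - ((r:ℝ)-1) * tak r x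
          ≤ ((r:ℝ)/4) * (1/(r:ℝ))^N := by
        intro N
        have h1' := sum_lower r hr x hx.1 h1 N
        set fr := Int.fract ((r:ℝ)^N * x) with hfr
        have hf0 : 0 ≤ fr := Int.fract_nonneg _
        have hf1 : fr < 1 := Int.fract_lt_one _
        have hPN : (0:ℝ) < (r:ℝ)^N := by positivity
        have hS : ∑ j ∈ Finset.range N, dZ ((r:ℝ)^j * x)/(r:ℝ)^j ≤ tak r x := by
          rw [htak]
          exact Summable.sum_le_tsum _ (fun j _ => div_nonneg (dZ_nonneg _) (by positivity)) hsum_d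
        have hterm : (1/(r:ℝ)^N) * ((r:ℝ) * (fr*(1-fr))) ≤ ((r:ℝ)/4) * (1/(r:ℝ))^N := by
          rw [one_div_pow]
          have hq : (r:ℝ) * (fr*(1-fr)) ≤ (r:ℝ)/4 := by nlinarith [sq_nonneg (fr - 1/2)]
          calc (1/(r:ℝ)^N) * ((r:ℝ)*(fr*(1-fr))) ≤ (1/(r:ℝ)^N)*((r:ℝ)/4) :=
                mul_le_mul_of_nonneg_left hq (by positivity)
            _ = ((r:ℝ)/4) * (1/(r:ℝ)^N) := by ring
        have hS' := mul_le_mul_of_nonneg_left hS (by linarith : (0:ℝ) ≤ (r:ℝ)-1)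
        linarith
      have hlim : Filter.Tendsto (fun N : ℕ => ((r:ℝ)/4) * (1/(r:ℝ))^N)
          Filter.atTop (nhds 0) := by
        have h0 : (0:ℝ) ≤ 1/(r:ℝ) := by positivity
        have h2 : 1/(r:ℝ) < 1 := by rw [div_lt_one (by linarith)]; linarith
        have := (tendsto_pow_atTop_nhds_zero_of_lt_one h0 h2).const_mul ((r:ℝ)/4)
        simpa using this
      have hle : (r:ℝ)*(x*(1-x)) - ((r:ℝ)-1) * tak r x ≤ 0 := ge_of_tendsto' hlim hbound
      have h2 : (r:ℝ)/((r:ℝ)-1)*(x*(1-x)) ≤ tak r x := by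
        rw [div_mul_eq_mul_div, div_le_iff₀ hR1]; linarith
      calc m * (r:ℝ)/((r:ℝ)-1)*(x*(1-x)) = m * ((r:ℝ)/((r:ℝ)-1)*(x*(1-x))) := by ring
        _ ≤ m * tak r x := mul_le_mul_of_nonneg_left h2 hm.le
  · have e1 : m * tak r x = ∑' j : ℕ, m * (dZ ((r:ℝ)^j*x)/(r:ℝ)^j) := by
      rw [tsum_mul_left]; rfl
    rw [e1]
    refine Summable.tsum_le_tsum (fun j => ?_) (hsum_d.mul_left m) hsum_ψ
    have hp : (0:ℝ) < (r:ℝ)^j := by positivity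
    rw [← mul_div_assoc]
    exact (div_le_div_iff_of_pos_right hp).mpr (hglob _)
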